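/- Let G be an edge-colored connected graph of order n and 1 <= k <= n-1. G has a spanning tree using at least k distinct colors if and only if for every subset R of the color set, the number of components of G - E_R(G) is at most n - k + |R|. -/

import Mathlib

open SimpleGraph Finset

/-- Number of connected components of a graph. -/
noncomputable def omega {V : Type*} (G : SimpleGraph V) : ℕ :=
  Nat.card G.ConnectedComponent

/-- Number of edges of `G` having color `c`. -/
noncomputable def colorCount {V C : Type*} (G : SimpleGraph V)
    (color : Sym2 V → C) (c : C) : ℕ :=
  Nat.card {e : Sym2 V // e ∈ G.edgeSet ∧ color e = c}

/-- `G` is `f`-chromatic: each color `c` appears on at most `f c` edges. -/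
def IsChromatic {V C : Type*} (G : SimpleGraph V)
    (color : Sym2 V → C) (f : C → ℕ) : Prop :=
  ∀ c, colorCount G color c ≤ f c

/-- `G - E_R(G)` : delete all edges whose color lies in `R`. -/
def delR {V C : Type*} (G : SimpleGraph V) (color : Sym2 V → C)
    (R : Finset C) : SimpleGraph V :=
  G.deleteEdges {e | color e ∈ R}

/-!
Write `n` for the number of vertices and `ω` for the number of components. A forest `F` has
`n - ω(F)` edges, and the edges of a tree `T` with colors outside `R` form a forest spanning a
subgraph of `G - E_R(G)`; so `T` has at most `n - ω(G - E_R(G)) + |R|` colors, which is necessity.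

Sufficiency is Rado's condition for a rainbow forest with `k` edges, proved by induction on the
number of edges. If all colors are distinct, any spanning forest has `n - ω(G) ≥ k` edges.
Otherwise two edges `e₁ ≠ e₂` share a color `c`. If neither `G - e₁` nor `G - e₂` satisfies the
condition, there are color sets `R₁`, `R₂` on which it is tight and such that `eᵢ` is a bridge of
`G - E_{Rᵢ}(G)`. Supermodularity of `ω` makes `R₁ ∪ R₂` tight as well, and as `e₁, e₂` are both
bridges of successive deletions from `G - E_{R₁ ∪ R₂}(G)`, the set `R₁ ∪ R₂ ∪ {c}` violates the
condition. The rainbow forest finally extends to a spanning tree of the connected graph `G`.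
-/

namespace SimpleGraph

variable {V : Type*} {G H : SimpleGraph V}

theorem Reachable.deleteEdges_edge_or {a b u v : V} (h : G.Reachable u v) :
    (G.deleteEdges {s(a, b)}).Reachable u v ∨ (G.deleteEdges {s(a, b)}).Reachable u a ∨
      (G.deleteEdges {s(a, b)}).Reachable u b := by
  obtain ⟨p⟩ := h
  induction p with
  | nil => exact .inl .rfl
  | @cons x y z hxy p ih =>
    by_cases he : s(x, y) = s(a, b)
    · rcases Sym2.eq_iff.mp he with ⟨rfl, rfl⟩ | ⟨rfl, rfl⟩
      · exact .inr (.inl .rfl)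
      · exact .inr (.inr .rfl)
    · have hxy' : (G.deleteEdges {s(a, b)}).Adj x y := by
        simpa only [deleteEdges_adj, Set.mem_singleton_iff] using ⟨hxy, he⟩
      exact ih.imp hxy'.reachable.trans (Or.imp hxy'.reachable.trans hxy'.reachable.trans)

theorem omega_bot : omega (⊥ : SimpleGraph V) = Nat.card V :=
  (Nat.card_eq_of_bijective _ ⟨fun _ _ h => reachable_bot.mp (ConnectedComponent.exact h),
    fun c => c.exists_rep⟩).symm

theorem deleteEdges_singleton_lt {e : Sym2 V} (he : e ∈ G.edgeSet) : G.deleteEdges {e} < G := by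
  rw [← edgeSet_ssubset_edgeSet, edgeSet_deleteEdges]
  exact Set.sdiff_singleton_ssubset.mpr he

variable [Finite V]

theorem omega_antitone : Antitone (omega (V := V)) :=
  fun _ _ h => ConnectedComponent.card_le_card_of_le h

theorem omega_eq_omega_iff_of_le (h : H ≤ G) :
    omega H = omega G ↔ ∀ u v, G.Reachable u v → H.Reachable u v := by
  have hsurj := ConnectedComponent.surjective_map_ofLE h
  rw [omega, omega, ← (Nat.bijective_iff_surjective_and_card _).trans (and_iff_right hsurj),
    Function.Bijective, and_iff_left hsurj]
  refine ⟨fun hinj u v huv => ConnectedComponent.exact (hinj (ConnectedComponent.sound huv)),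
    fun hr c d => ?_⟩
  induction c using ConnectedComponent.ind
  induction d using ConnectedComponent.ind
  exact fun hcd => ConnectedComponent.sound (hr _ _ (ConnectedComponent.exact hcd))

theorem omega_deleteEdges_le_succ (G : SimpleGraph V) (e : Sym2 V) :
    omega (G.deleteEdges {e}) ≤ omega G + 1 := by
  classical
  induction e with | h a b =>
  set G' := G.deleteEdges {s(a, b)}
  -- apart from that of `b`, a component of `G'` is determined by its image in `G`
  let f (c : G'.ConnectedComponent) : Option G.ConnectedComponent :=
    if c = G'.connectedComponentMk b then none
    else some (c.map (Hom.ofLE (deleteEdges_le _)))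
  have hf : Function.Injective f := by
    intro c d hcd
    induction c using ConnectedComponent.ind with | h u =>
    induction d using ConnectedComponent.ind with | h v =>
    by_cases hu : G'.Reachable u b <;> by_cases hv : G'.Reachable v b
    · exact ConnectedComponent.sound (hu.trans hv.symm)
    all_goals simp only [f, ConnectedComponent.eq, hu, hv, if_true, if_false, reduceCtorEq,
      Option.some_inj] at hcd
    replace hcd : G.Reachable u v := ConnectedComponent.exact hcd
    rcases hcd.deleteEdges_edge_or (a := a) (b := b) with huv | hua | hub
    · exact ConnectedComponent.sound huv
    · rcases hcd.symm.deleteEdges_edge_or (a := a) (b := b) with hvu | hva | hvb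
      · exact ConnectedComponent.sound hvu.symm
      · exact ConnectedComponent.sound (hua.trans hva.symm)
      · exact absurd hvb hv
    · exact absurd hub hu
  calc omega G' ≤ Nat.card (Option G.ConnectedComponent) := Nat.card_le_card_of_injective f hf
    _ = omega G + 1 := Finite.card_option

theorem omega_deleteEdges_of_not_isBridge {e : Sym2 V} (h : ¬G.IsBridge e) :
    omega (G.deleteEdges {e}) = omega G := by
  induction e with | h a b =>
  rw [isBridge_iff, not_not] at h
  refine (omega_eq_omega_iff_of_le (deleteEdges_le _)).mpr fun u v huv => ?_
  rcases huv.deleteEdges_edge_or (a := a) (b := b) with huv' | hua | hub <;>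
    rcases huv.symm.deleteEdges_edge_or (a := a) (b := b) with hvu | hva | hvb
  all_goals first
    | exact huv' | exact hvu.symm | exact hua.trans hva.symm | exact hub.trans hvb.symm
    | exact hua.trans (h.trans hvb.symm) | exact hub.trans (h.symm.trans hva.symm)

theorem omega_deleteEdges_of_isBridge {e : Sym2 V} (he : e ∈ G.edgeSet) (h : G.IsBridge e) :
    omega (G.deleteEdges {e}) = omega G + 1 := by
  induction e with | h a b =>
  have hne : omega (G.deleteEdges {s(a, b)}) ≠ omega G := fun heq =>
    h ((omega_eq_omega_iff_of_le (deleteEdges_le _)).mp heq a b (G.mem_edgeSet.mp he).reachable)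
  have := omega_antitone (G.deleteEdges_le {s(a, b)})
  have := omega_deleteEdges_le_succ G s(a, b)
  omega

theorem IsAcyclic.omega_add_ncard_edgeSet (hG : G.IsAcyclic) :
    omega G + G.edgeSet.ncard = Nat.card V := by
  induction G using WellFoundedLT.induction with | _ G ih =>
  obtain hbot | ⟨e, he⟩ := G.edgeSet.eq_empty_or_nonempty
  · rw [hbot, edgeSet_eq_empty.mp hbot, Set.ncard_empty, add_zero, omega_bot]
  · have hG' := ih _ (deleteEdges_singleton_lt he) (hG.anti (deleteEdges_le _))
    rw [omega_deleteEdges_of_isBridge he (isAcyclic_iff_forall_isBridge.mp hG he),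
      edgeSet_deleteEdges, Set.ncard_sdiff_singleton_of_mem he] at hG'
    have := (Set.ncard_pos G.edgeSet.toFinite).mpr ⟨e, he⟩
    omega

theorem omega_add_omega_le_omega_sup_add_omega_inf (A B : SimpleGraph V) :
    omega A + omega B ≤ omega (A ⊔ B) + omega (A ⊓ B) := by
  induction B using WellFoundedLT.induction with | _ B ih =>
  by_cases hBA : B ≤ A
  · rw [sup_of_le_left hBA, inf_of_le_right hBA, add_comm]
  obtain ⟨e, heB, heA⟩ : ∃ e ∈ B.edgeSet, e ∉ A.edgeSet :=
    Set.not_subset.mp fun h => hBA (edgeSet_subset_edgeSet.mp h)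
  have hinf : A ⊓ B.deleteEdges {e} = A ⊓ B := by
    rw [← edgeSet_inj, edgeSet_inf, edgeSet_inf, edgeSet_deleteEdges, ← Set.inter_sdiff_assoc,
      Set.sdiff_singleton_eq_self fun h => heA h.1]
  have hsup : A ⊔ B.deleteEdges {e} = (A ⊔ B).deleteEdges {e} := by
    rw [deleteEdges_sup, deleteEdges_eq_self.mpr (Set.disjoint_singleton_right.mpr heA)]
  have IH := ih _ (deleteEdges_singleton_lt heB)
  rw [hinf, hsup] at IH
  by_cases hb : B.IsBridge e
  · rw [omega_deleteEdges_of_isBridge heB hb] at IH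
    have := omega_deleteEdges_le_succ (A ⊔ B) e
    omega
  · rwa [omega_deleteEdges_of_not_isBridge hb,
      omega_deleteEdges_of_not_isBridge fun h => hb (h.anti le_sup_right)] at IH

end SimpleGraph

section Colors

variable {V C : Type*} {G H : SimpleGraph V} {color : Sym2 V → C}

theorem mem_edgeSet_delR {R : Finset C} {e : Sym2 V} :
    e ∈ (delR G color R).edgeSet ↔ e ∈ G.edgeSet ∧ color e ∉ R := by
  simp [delR]

theorem delR_mono (h : H ≤ G) (R : Finset C) : delR H color R ≤ delR G color R :=
  deleteEdges_mono h

theorem delR_anti {R S : Finset C} (h : R ⊆ S) : delR G color S ≤ delR G color R :=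
  deleteEdges_anti fun _ he => h he

@[simp]
theorem delR_empty : delR G color ∅ = G := by
  simp [delR]

theorem delR_union [DecidableEq C] (R S : Finset C) :
    delR G color (R ∪ S) = delR G color R ⊓ delR G color S := by
  ext u v
  simp only [delR, inf_adj, deleteEdges_adj, Set.mem_ofPred_eq, mem_union]
  tauto

theorem delR_inter [DecidableEq C] (R S : Finset C) :
    delR G color (R ∩ S) = delR G color R ⊔ delR G color S := by
  ext u v
  simp only [delR, sup_adj, deleteEdges_adj, Set.mem_ofPred_eq, mem_inter]
  tauto

theorem delR_deleteEdges (s : Set (Sym2 V)) (R : Finset C) :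
    delR (G.deleteEdges s) color R = (delR G color R).deleteEdges s := by
  rw [delR, delR, deleteEdges_deleteEdges, deleteEdges_deleteEdges, Set.union_comm]

-- `ω(G - E_R(G)) ≤ n - k + |R|`, stated without truncated subtraction
def RadoCondition (G : SimpleGraph V) (color : Sym2 V → C) (k : ℕ) : Prop :=
  ∀ R : Finset C, k + omega (delR G color R) ≤ Nat.card V + R.card

variable [Finite V] {k : ℕ}

theorem ncard_image_add_omega_delR_le {F : SimpleGraph V} (hFG : F ≤ G) (hF : F.IsAcyclic)
    (R : Finset C) : (color '' F.edgeSet).ncard + omega (delR G color R) ≤ Nat.card V + R.card := by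
  have hforest := (hF.anti (deleteEdges_le _) : (delR F color R).IsAcyclic).omega_add_ncard_edgeSet
  have hcolors : color '' F.edgeSet ⊆ color '' (delR F color R).edgeSet ∪ R := by
    rintro _ ⟨e, he, rfl⟩
    by_cases hc : color e ∈ R
    · exact Or.inr hc
    · exact Or.inl ⟨e, mem_edgeSet_delR.mpr ⟨he, hc⟩, rfl⟩
  have hncard : (color '' F.edgeSet).ncard ≤ (delR F color R).edgeSet.ncard + R.card :=
    calc (color '' F.edgeSet).ncard
        ≤ (color '' (delR F color R).edgeSet).ncard + (R : Set C).ncard :=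
          (Set.ncard_le_ncard hcolors (Set.toFinite _)).trans (Set.ncard_union_le _ _)
      _ ≤ (delR F color R).edgeSet.ncard + R.card := by
          rw [Set.ncard_coe_finset]
          gcongr
          exact Set.ncard_image_le (Set.toFinite _)
  have := omega_antitone (delR_mono hFG R (color := color))
  omega

theorem exists_isAcyclic_le_ncard_image_of_injOn (hinj : Set.InjOn color G.edgeSet)
    (hk : k + omega G ≤ Nat.card V) : ∃ F ≤ G, F.IsAcyclic ∧ k ≤ (color '' F.edgeSet).ncard := by
  obtain ⟨F, hFG, hF, hreach⟩ := G.exists_isAcyclic_reachable_eq_le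
  refine ⟨F, hFG, hF, ?_⟩
  have homega : omega F = omega G := (omega_eq_omega_iff_of_le hFG).mpr fun u v h => hreach ▸ h
  have hforest := hF.omega_add_ncard_edgeSet
  rw [(hinj.mono (edgeSet_mono hFG)).ncard_image]
  omega

theorem isBridge_delR_of_lt {R : Finset C} {e : Sym2 V}
    (hG : k + omega (delR G color R) ≤ Nat.card V + R.card)
    (hGe : Nat.card V + R.card < k + omega (delR (G.deleteEdges {e}) color R)) :
    e ∈ (delR G color R).edgeSet ∧ (delR G color R).IsBridge e ∧
      k + omega (delR G color R) = Nat.card V + R.card := by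
  rw [delR_deleteEdges] at hGe
  set A := delR G color R
  have := omega_deleteEdges_le_succ A e
  have hne : omega (A.deleteEdges {e}) ≠ omega A := by omega
  refine ⟨by_contra fun he => hne ?_, by_contra fun hb => hne ?_, by omega⟩
  · rw [deleteEdges_eq_self.mpr (Set.disjoint_singleton_right.mpr he)]
  · exact omega_deleteEdges_of_not_isBridge hb

theorem RadoCondition.deleteEdges_or (hG : RadoCondition G color k) {e₁ e₂ : Sym2 V}
    (he₁ : e₁ ∈ G.edgeSet) (he₂ : e₂ ∈ G.edgeSet) (hne : e₁ ≠ e₂) (hcolor : color e₁ = color e₂) :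
    RadoCondition (G.deleteEdges {e₁}) color k ∨ RadoCondition (G.deleteEdges {e₂}) color k := by
  classical
  by_contra! h
  simp only [RadoCondition, not_forall, not_le] at h
  obtain ⟨⟨R₁, h₁⟩, ⟨R₂, h₂⟩⟩ := h
  obtain ⟨he₁R, hb₁, ht₁⟩ := isBridge_delR_of_lt (hG R₁) h₁
  obtain ⟨he₂R, hb₂, ht₂⟩ := isBridge_delR_of_lt (hG R₂) h₂
  rw [mem_edgeSet_delR] at he₁R he₂R
  have hc : color e₁ ∉ R₁ ∪ R₂ := by
    rw [mem_union, not_or, hcolor]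
    exact ⟨hcolor ▸ he₁R.2, he₂R.2⟩
  have hsm := omega_add_omega_le_omega_sup_add_omega_inf (delR G color R₁) (delR G color R₂)
  rw [← delR_inter, ← delR_union] at hsm
  set K := delR G color (R₁ ∪ R₂)
  have he₁K : e₁ ∈ K.edgeSet := mem_edgeSet_delR.mpr ⟨he₁, hc⟩
  have he₂K : e₂ ∈ (K.deleteEdges {e₁}).edgeSet := by
    rw [edgeSet_deleteEdges]
    exact ⟨mem_edgeSet_delR.mpr ⟨he₂, hcolor ▸ hc⟩, hne.symm⟩
  have hK₁ := omega_deleteEdges_of_isBridge he₁K (hb₁.anti (delR_anti subset_union_left))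
  have hK₂ := omega_deleteEdges_of_isBridge he₂K
    (hb₂.anti ((deleteEdges_le _).trans (delR_anti subset_union_right)))
  have hins : delR G color (insert (color e₁) (R₁ ∪ R₂)) ≤
      (K.deleteEdges {e₁}).deleteEdges {e₂} := by
    rw [← edgeSet_subset_edgeSet]
    intro e he
    simp only [mem_edgeSet_delR, edgeSet_deleteEdges, K, mem_insert, not_or, Set.mem_sdiff,
      Set.mem_singleton_iff] at he ⊢
    exact ⟨⟨⟨he.1, he.2.2⟩, fun h => he.2.1 (by rw [h])⟩, fun h => he.2.1 (by rw [h, hcolor])⟩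
  have hR := hG (insert (color e₁) (R₁ ∪ R₂))
  rw [card_insert_of_notMem hc] at hR
  have := omega_antitone hins
  have := hG (R₁ ∩ R₂)
  have := card_union_add_card_inter R₁ R₂
  omega

theorem RadoCondition.exists_isAcyclic (h : RadoCondition G color k) :
    ∃ F ≤ G, F.IsAcyclic ∧ k ≤ (color '' F.edgeSet).ncard := by
  induction G using WellFoundedLT.induction with | _ G ih =>
  by_cases hinj : Set.InjOn color G.edgeSet
  · exact exists_isAcyclic_le_ncard_image_of_injOn hinj (by simpa using h ∅)
  obtain ⟨e₁, he₁, e₂, he₂, hcolor, hne⟩ :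
      ∃ e₁ ∈ G.edgeSet, ∃ e₂ ∈ G.edgeSet, color e₁ = color e₂ ∧ e₁ ≠ e₂ := by
    simpa [Set.InjOn] using hinj
  have descend : ∀ e ∈ G.edgeSet, RadoCondition (G.deleteEdges {e}) color k →
      ∃ F ≤ G, F.IsAcyclic ∧ k ≤ (color '' F.edgeSet).ncard := fun e he he' =>
    let ⟨F, hF, hrest⟩ := ih _ (deleteEdges_singleton_lt he) he'
    ⟨F, hF.trans (deleteEdges_le _), hrest⟩
  rcases h.deleteEdges_or he₁ he₂ hne hcolor with h₁ | h₂
  · exact descend e₁ he₁ h₁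
  · exact descend e₂ he₂ h₂

end Colors

theorem stmt10_general {V C : Type*} [Fintype V] (G : SimpleGraph V) (color : Sym2 V → C)
    (n k : ℕ) (hn : Fintype.card V = n) (hG : G.Connected)
    (hk2 : k ≤ n - 1) :
    (∃ F : SimpleGraph V, F ≤ G ∧ F.IsTree ∧ k ≤ Nat.card (color '' F.edgeSet)) ↔
      ∀ R : Finset C, omega (delR G color R) ≤ n - k + R.card := by
  rw [← Nat.card_eq_fintype_card] at hn
  subst hn
  simp only [Nat.card_coe_set_eq]
  constructor
  · rintro ⟨T, hTG, hT, hk⟩ R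
    have := ncard_image_add_omega_delR_le (color := color) hTG hT.isAcyclic R
    omega
  · intro h
    obtain ⟨F, hFG, hF, hk⟩ := RadoCondition.exists_isAcyclic (G := G) (color := color) (k := k)
      fun R => by have := h R; omega
    obtain ⟨T, hFT, hTG, hT⟩ := hG.exists_isTree_le_of_le_of_isAcyclic hFG hF
    exact ⟨T, hTG, hT, hk.trans (Set.ncard_le_ncard (Set.image_mono (edgeSet_mono hFT)))⟩

theorem stmt10 {V C : Type*} [Fintype V] (G : SimpleGraph V) (color : Sym2 V → C)
    (n k : ℕ) (hn : Fintype.card V = n) (hG : G.Connected)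
    (hk1 : 1 ≤ k) (hk2 : k ≤ n - 1) :
    (∃ F : SimpleGraph V, F ≤ G ∧ F.IsTree ∧ k ≤ Nat.card (color '' F.edgeSet)) ↔
      ∀ R : Finset C, omega (delR G color R) ≤ n - k + R.card :=
  stmt10_general G color n k hn hG hk2
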